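/- Let ξ_1, ξ_2, … be i.i.d. real random variables, symmetric about 0, with P(|ξ_1| > t) = 1/(1 + t^γ) for all t ≥ 0, where γ > 1. Fix μ > 0, let S_0 = 0 and S_j = Σ_{i=1}^j (ξ_i + μ), and for each j ∈ ℕ let A_j be the event that S_j < S_i for all i ∈ ℕ with i ≠ j (the walk attains its strict minimum at time j). Set p* = P(S_i > 0 for all i ≥ 1), c₁ = 1/(2(1 + μ^{−γ})(1 + μ)^γ), c₂ = inf_{x ≥ 1}(x/(1+x))^{x−1}, and k₀ = max(1, ⌈μ^{−γ/(γ−1)}⌉). Then for every integer k ≥ k₀: Σ_{j=k}^∞ P(A_j) ≥ (c₁c₂p*/γ) · k^{−γ}. -/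

import Mathlib

open MeasureTheory ProbabilityTheory Filter

/-- The constant `c₁ = 1/(2(1 + μ^{−γ})(1 + μ)^γ)`. -/
noncomputable def cOne (γ μ : ℝ) : ℝ := 1 / (2 * (1 + μ ^ (-γ)) * (1 + μ) ^ γ)

/-- The constant `c₂ = inf_{x ≥ 1} (x/(1+x))^{x−1}`. -/
noncomputable def cTwo : ℝ := ⨅ x : {x : ℝ // 1 ≤ x}, ((x : ℝ) / (1 + (x : ℝ))) ^ ((x : ℝ) - 1)

/-- The threshold `k₀ = max(1, ⌈μ^{−γ/(γ−1)}⌉)`. -/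
noncomputable def kZero (γ μ : ℝ) : ℤ := max 1 ⌈μ ^ (-γ / (γ - 1))⌉

/-- The positively drifted random walk `S_j = Σ_{i=1}^j (ξ_i + μ)`. -/
noncomputable def walk {Ω : Type*} (ξ : ℕ → Ω → ℝ) (μ : ℝ) (j : ℕ) (ω : Ω) : ℝ :=
  ∑ i ∈ Finset.range j, (ξ i ω + μ)

lemma aux_cTwo' : (0:ℝ) ≤ cTwo := by
  rw [cTwo]
  exact Real.iInf_nonneg fun x => Real.rpow_nonneg
    (div_nonneg (by linarith [x.2]) (by linarith [x.2])) _

lemma aux_cTwo_le {x : ℝ} (hx : 1 ≤ x) : cTwo ≤ (x / (1 + x)) ^ (x - 1) := by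
  rw [cTwo]
  have hb : BddBelow (Set.range fun y : {x : ℝ // 1 ≤ x} =>
      ((y : ℝ) / (1 + (y : ℝ))) ^ ((y : ℝ) - 1)) := by
    refine ⟨0, ?_⟩
    rintro r ⟨z, rfl⟩
    exact Real.rpow_nonneg (div_nonneg (by linarith [z.2]) (by linarith [z.2])) _
  exact ciInf_le hb ⟨x, hx⟩

lemma aux_bernoulli {γ : ℝ} (hγ : 1 ≤ γ) {x : ℝ} (hx : 1 ≤ x) :
    x ^ (-γ) - (x + 1) ^ (-γ) ≤ γ * x ^ (-(γ + 1)) := by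
  have hx0 : (0:ℝ) < x := lt_of_lt_of_le one_pos hx
  have hx1 : (0:ℝ) < x + 1 := by linarith
  have hr0 : 0 < x / (x + 1) := div_pos hx0 hx1
  have hb : 1 + γ * (x / (x + 1) - 1) ≤ (x / (x + 1)) ^ γ := by
    have h := one_add_mul_self_le_rpow_one_add (s := x / (x + 1) - 1) (by linarith) hγ
    simpa using h
  have hxg : (0:ℝ) < x ^ (-γ) := Real.rpow_pos_of_pos hx0 _
  have h1 : (x + 1) ^ (-γ) = x ^ (-γ) * (x / (x + 1)) ^ γ := by
    rw [Real.div_rpow hx0.le hx1.le, Real.rpow_neg hx0.le, Real.rpow_neg hx1.le]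
    have h2 : (0:ℝ) < x ^ γ := Real.rpow_pos_of_pos hx0 _
    have h3 : (0:ℝ) < (x+1) ^ γ := Real.rpow_pos_of_pos hx1 _
    field_simp
  have h3 : x ^ (-(γ + 1)) = x ^ (-γ) * x⁻¹ := by
    rw [show -(γ+1) = -γ + (-1) by ring, Real.rpow_add hx0, Real.rpow_neg_one]
  have h4 : (1:ℝ) - x / (x + 1) = 1 / (x + 1) := by field_simp; ring
  have h5 : (1:ℝ) / (x + 1) ≤ x⁻¹ := by
    rw [one_div]
    exact inv_anti₀ hx0 (by linarith)
  calc x ^ (-γ) - (x + 1) ^ (-γ) = x ^ (-γ) * (1 - (x / (x + 1)) ^ γ) := by rw [h1]; ring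
    _ ≤ x ^ (-γ) * (γ * (1 / (x + 1))) := by
        apply mul_le_mul_of_nonneg_left _ hxg.le
        rw [← h4]; linarith
    _ ≤ x ^ (-γ) * (γ * x⁻¹) := by
        apply mul_le_mul_of_nonneg_left _ hxg.le
        apply mul_le_mul_of_nonneg_left h5 (by linarith)
    _ = γ * x ^ (-(γ + 1)) := by rw [h3]; ring

lemma aux_antitone {γ : ℝ} (hγ : 0 < γ) {x y : ℝ} (hx : 0 < x) (hxy : x ≤ y) :
    y ^ (-γ) ≤ x ^ (-γ) :=
  Real.rpow_le_rpow_of_nonpos hx hxy (by linarith)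

lemma aux_telescope {γ : ℝ} (hγ : 0 < γ) (k : ℕ) (hk : 1 ≤ k) :
    HasSum (fun m : ℕ => (((m + k : ℕ)) : ℝ) ^ (-γ) - ((((m + k : ℕ)) : ℝ) + 1) ^ (-γ))
      ((k : ℝ) ^ (-γ)) := by
  set g : ℕ → ℝ := fun m => (((m + k : ℕ)) : ℝ) ^ (-γ) with hg
  have hcast : ∀ m : ℕ, (((m + k : ℕ)) : ℝ) + 1 = ((m + 1 + k : ℕ) : ℝ) := by
    intro m; push_cast; ring
  have hterm : ∀ m : ℕ, (((m + k : ℕ)) : ℝ) ^ (-γ) - ((((m + k : ℕ)) : ℝ) + 1) ^ (-γ)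
      = g m - g (m + 1) := by
    intro m; rw [hcast m, hg]
  have hpos : ∀ m : ℕ, (0:ℝ) < ((m + k : ℕ) : ℝ) := by
    intro m; exact_mod_cast Nat.lt_of_lt_of_le hk (by omega)
  have hnn : ∀ m : ℕ, 0 ≤ g m - g (m + 1) := by
    intro m
    apply sub_nonneg.mpr
    apply aux_antitone hγ (hpos m)
    exact_mod_cast by omega
  simp only [hterm]
  rw [hasSum_iff_tendsto_nat_of_nonneg hnn]
  have hps : ∀ N : ℕ, ∑ m ∈ Finset.range N, (g m - g (m + 1)) = g 0 - g N :=
    fun N => Finset.sum_range_sub' g N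
  simp only [hps]
  have hg0 : g 0 = (k : ℝ) ^ (-γ) := by simp [hg]
  have hlim : Tendsto g atTop (nhds 0) := by
    rw [hg]
    apply (tendsto_rpow_neg_atTop hγ).comp
    apply tendsto_natCast_atTop_atTop.comp
    exact tendsto_add_atTop_nat k
  have := (tendsto_const_nhds (x := g 0)).sub hlim
  rw [sub_zero, hg0] at this
  rw [← hg0] at this ⊢
  exact this

lemma aux_sum_filter {M : ℕ} (m : Fin M) (g : ℕ → ℝ) :
    ∑ i ∈ Finset.univ.filter (fun i : Fin M => i ≤ m), g i
      = ∑ i ∈ Finset.range ((m : ℕ) + 1), g i := by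
  classical
  refine Finset.sum_bij' (fun (a : Fin M) _ => (a : ℕ))
    (fun b hb => (⟨b, by simp only [Finset.mem_range] at hb; omega⟩ : Fin M)) ?_ ?_ ?_ ?_ ?_
  · intro a ha
    simp only [Finset.mem_filter, Finset.mem_univ, true_and, Fin.le_def] at ha
    simp only [Finset.mem_range]
    omega
  · intro b hb
    simp only [Finset.mem_range] at hb
    simp only [Finset.mem_filter, Finset.mem_univ, true_and, Fin.le_def]
    omega
  · intro a ha; rfl
  · intro b hb; rfl
  · intro a ha; rfl

set_option maxHeartbeats 2000000 in
/-- Heavy-tailed lower bound for the minimizer of the positively drifted random walk: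
for `k ≥ k₀`, `Σ_{j ≥ k} P(A_j) ≥ (c₁c₂p*/γ)·k^{−γ}` where `A_j` is the event that the walk
attains its strict minimum at time `j`. -/
theorem stmt5 {Ω : Type*} [MeasurableSpace Ω] (P : Measure Ω) [IsProbabilityMeasure P]
    (ξ : ℕ → Ω → ℝ) (hmeas : ∀ i, Measurable (ξ i))
    (hindep : iIndepFun ξ P)
    (hident : ∀ i, P.map (ξ i) = P.map (ξ 0))
    (hsym : P.map (ξ 0) = P.map (fun ω => -ξ 0 ω))
    (γ : ℝ) (hγ : 1 < γ)
    (htail : ∀ t : ℝ, 0 ≤ t → P {ω | t < |ξ 0 ω|} = ENNReal.ofReal (1 / (1 + t ^ γ)))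
    (μ : ℝ) (hμ : 0 < μ)
    (pstar : ℝ) (hpstar : pstar = (P {ω | ∀ i : ℕ, 1 ≤ i → 0 < walk ξ μ i ω}).toReal)
    (k : ℕ) (hk : kZero γ μ ≤ (k : ℤ)) :
    ENNReal.ofReal (cOne γ μ * cTwo * pstar / γ * (k : ℝ) ^ (-γ)) ≤
      ∑' j : {j : ℕ // k ≤ j},
        P {ω | ∀ i : ℕ, i ≠ (j : ℕ) → walk ξ μ (j : ℕ) ω < walk ξ μ i ω} := by
  classical
  have hγ0 : (0:ℝ) < γ := by linarith
  have hγ1 : (1:ℝ) ≤ γ := hγ.le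
  have hk1 : 1 ≤ k := by
    have h : (1:ℤ) ≤ (k:ℤ) := le_trans (le_max_left _ _) hk
    exact_mod_cast h
  set ν : Measure ℝ := P.map (ξ 0) with hν
  haveI hνprob : IsProbabilityMeasure ν := Measure.isProbabilityMeasure_map (hmeas 0).aemeasurable
  -- marginal computations
  have hmap : ∀ (i : ℕ) (s : Set ℝ), MeasurableSet s → P (ξ i ⁻¹' s) = ν s := by
    intro i s hs
    rw [← hident i, Measure.map_apply (hmeas i) hs]
  have habs_meas : ∀ t : ℝ, MeasurableSet {x : ℝ | t < |x|} :=
    fun t => measurableSet_lt measurable_const measurable_abs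
  have htail' : ∀ t : ℝ, 0 ≤ t → ν {x | t < |x|} = ENNReal.ofReal (1 / (1 + t ^ γ)) := by
    intro t ht
    rw [← hmap 0 _ (habs_meas t)]
    exact htail t ht
  have hden : ∀ t : ℝ, 0 ≤ t → (0:ℝ) < 1 + t ^ γ := by
    intro t ht
    have := Real.rpow_nonneg ht γ
    linarith
  have habs : ∀ t : ℝ, 0 ≤ t → ν {x | |x| ≤ t} = ENNReal.ofReal (t ^ γ / (1 + t ^ γ)) := by
    intro t ht
    have hc : {x : ℝ | |x| ≤ t} = {x : ℝ | t < |x|}ᶜ := by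
      ext x; simp [not_lt]
    rw [hc, measure_compl (habs_meas t) (measure_ne_top _ _), htail' t ht, measure_univ]
    rw [← ENNReal.ofReal_one, ← ENNReal.ofReal_sub _ (by positivity)]
    congr 1
    have := hden t ht
    field_simp
    ring
  have hneg : ∀ t : ℝ, 0 ≤ t → ν (Set.Iio (-t)) = ENNReal.ofReal (1 / (2 * (1 + t ^ γ))) := by
    intro t ht
    have hsymm : ν (Set.Iio (-t)) = ν (Set.Ioi t) := by
      have h1 : ν (Set.Iio (-t)) = P.map (fun ω => -ξ 0 ω) (Set.Iio (-t)) := by rw [hν, ← hsym]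
      rw [Measure.map_apply (f := fun ω => -ξ 0 ω) (hmeas 0).neg measurableSet_Iio] at h1
      have h2 : (fun ω => -ξ 0 ω) ⁻¹' (Set.Iio (-t)) = ξ 0 ⁻¹' (Set.Ioi t) := by
        ext ω
        simp only [Set.mem_preimage, Set.mem_Iio, Set.mem_Ioi]
        constructor <;> intro h <;> linarith
      rw [h2, hmap 0 _ measurableSet_Ioi] at h1
      exact h1
    have hunion : {x : ℝ | t < |x|} = Set.Iio (-t) ∪ Set.Ioi t := by
      ext x
      simp only [Set.mem_setOf_eq, Set.mem_union, Set.mem_Iio, Set.mem_Ioi, lt_abs]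
      constructor
      · rintro (h | h)
        · right; exact h
        · left; linarith
      · rintro (h | h)
        · right; linarith
        · left; exact h
    have hdisj : Disjoint (Set.Iio (-t)) (Set.Ioi t) := by
      rw [Set.disjoint_left]
      intro x hx hx'
      simp only [Set.mem_Iio] at hx
      simp only [Set.mem_Ioi] at hx'
      linarith
    have hadd : ν (Set.Iio (-t)) + ν (Set.Iio (-t)) = ENNReal.ofReal (1 / (1 + t ^ γ)) := by
      nth_rewrite 2 [hsymm]
      rw [← measure_union hdisj measurableSet_Ioi, ← hunion, htail' t ht]
    have hne : ν (Set.Iio (-t)) ≠ ⊤ := measure_ne_top _ _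
    have h1t : (0:ℝ) ≤ 1 / (1 + t ^ γ) := by positivity
    have htr := congrArg ENNReal.toReal hadd
    rw [ENNReal.toReal_add hne hne, ENNReal.toReal_ofReal h1t] at htr
    have hden' := hden t ht
    have hval : (ν (Set.Iio (-t))).toReal = 1 / (2 * (1 + t ^ γ)) := by
      field_simp at htr ⊢
      linarith
    rw [← ENNReal.ofReal_toReal hne, hval]
  -- vector machinery
  have hVecMeas : ∀ (l M : ℕ), Measurable (fun ω (i : Fin M) => ξ ((i : ℕ) + l) ω) :=
    fun l M => measurable_pi_lambda _ (fun i => hmeas _)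
  set D : (M : ℕ) → Set (Fin M → ℝ) := fun M =>
    {x | ∀ m : Fin M, 0 < ∑ i ∈ Finset.univ.filter (fun i : Fin M => i ≤ m), (x i + μ)} with hD
  have hDmeas : ∀ M, MeasurableSet (D M) := by
    intro M
    have h : D M = ⋂ m : Fin M,
        {x : Fin M → ℝ | 0 < ∑ i ∈ Finset.univ.filter (fun i : Fin M => i ≤ m), (x i + μ)} := by
      ext x; simp [hD]
    rw [h]
    refine MeasurableSet.iInter fun m => measurableSet_lt measurable_const ?_
    exact Finset.measurable_sum _ fun i _ => by fun_prop
  set CF : ℕ → ℕ → Set Ω := fun l M =>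
    {ω | ∀ m, 1 ≤ m → m ≤ M → 0 < ∑ i ∈ Finset.range m, (ξ (i + l) ω + μ)} with hCF
  set Cs : ℕ → Set Ω := fun l =>
    {ω | ∀ m, 1 ≤ m → 0 < ∑ i ∈ Finset.range m, (ξ (i + l) ω + μ)} with hCs
  have hpre : ∀ l M, (fun ω (i : Fin M) => ξ ((i : ℕ) + l) ω) ⁻¹' (D M) = CF l M := by
    intro l M
    ext ω
    simp only [hD, hCF, Set.mem_preimage, Set.mem_setOf_eq]
    constructor
    · intro h m h1 hM
      have h2 := h ⟨m - 1, by omega⟩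
      rw [aux_sum_filter ⟨m - 1, by omega⟩ (fun i => ξ (i + l) ω + μ)] at h2
      simpa [Nat.sub_add_cancel h1] using h2
    · intro h m
      have h2 := h ((m : ℕ) + 1) (by omega) (by omega)
      rw [aux_sum_filter m (fun i => ξ (i + l) ω + μ)]
      exact h2
  have hlaw : ∀ l M : ℕ, P.map (fun ω (i : Fin M) => ξ ((i : ℕ) + l) ω)
      = Measure.pi (fun _ : Fin M => ν) := by
    intro l M
    refine (Measure.pi_eq ?_).symm
    intro s hs
    set s' : ℕ → Set ℝ := fun i => if h : i < M then s ⟨i, h⟩ else Set.univ with hs'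
    have hs'meas : ∀ i, MeasurableSet (s' i) := by
      intro i
      rw [hs']
      dsimp only
      split
      · exact hs _
      · exact MeasurableSet.univ
    have hs'eq : ∀ i : Fin M, s' (i : ℕ) = s i := by
      intro i
      rw [hs']
      simp [i.2]
    rw [Measure.map_apply (hVecMeas l M) (MeasurableSet.univ_pi hs)]
    have hpre2 : (fun ω (i : Fin M) => ξ ((i : ℕ) + l) ω) ⁻¹' (Set.univ.pi s)
        = ⋂ i ∈ Finset.image (· + l) (Finset.range M), ξ i ⁻¹' s' (i - l) := by
      ext ω
      simp only [Set.mem_preimage, Set.mem_pi, Set.mem_univ, forall_true_left, Set.mem_iInter,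
        Finset.mem_image, Finset.mem_range]
      constructor
      · rintro h i ⟨i', hi', rfl⟩
        have h2 := h ⟨i', hi'⟩
        show ξ (i' + l) ω ∈ s' (i' + l - l)
        rw [show i' + l - l = i' by omega, hs']
        simp only [hi', dif_pos]
        exact h2
      · intro h i
        have h2 := h ((i : ℕ) + l) ⟨i, i.2, rfl⟩
        rw [show (i : ℕ) + l - l = (i : ℕ) by omega, hs'eq i] at h2
        exact h2
    rw [hpre2, hindep.measure_inter_preimage_eq_mul _ (fun i _ => hs'meas _)]
    rw [Finset.prod_image (by intro a _ b _ hab; simp only at hab; omega)]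
    have hstep : ∀ i ∈ Finset.range M, P (ξ (i + l) ⁻¹' s' (i + l - l)) = ν (s' i) := by
      intro i hi
      rw [show i + l - l = i by omega, hmap _ _ (hs'meas i)]
    rw [Finset.prod_congr rfl hstep]
    rw [← Fin.prod_univ_eq_prod_range (fun i => ν (s' i)) M]
    exact Finset.prod_congr rfl fun i _ => by rw [hs'eq i]
  have hCFmeas : ∀ l M, MeasurableSet (CF l M) := by
    intro l M
    rw [← hpre l M]
    exact hVecMeas l M (hDmeas M)
  have hCFanti : ∀ l, Antitone (fun M => CF l M) := by
    intro l M M' h ω hω m h1 h2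
    exact hω m h1 (le_trans h2 h)
  have hCFiInter : ∀ l, ⋂ M, CF l M = Cs l := by
    intro l
    ext ω
    simp only [Set.mem_iInter, hCF, hCs, Set.mem_setOf_eq]
    constructor
    · intro h m h1
      exact h m m h1 le_rfl
    · intro h M m h1 _
      exact h m h1
  have htendC : ∀ l, Tendsto (fun M => P (CF l M)) atTop (nhds (P (Cs l))) := by
    intro l
    rw [← hCFiInter l]
    exact tendsto_measure_iInter_atTop (fun M => (hCFmeas l M).nullMeasurableSet)
      (hCFanti l) ⟨0, measure_ne_top _ _⟩
  have hCFlaw : ∀ l M, P (CF l M) = Measure.pi (fun _ : Fin M => ν) (D M) := by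
    intro l M
    rw [← hpre l M, ← hlaw l M, Measure.map_apply (hVecMeas l M) (hDmeas M)]
  have hCeq : ∀ l, P (Cs l) = P (Cs 0) := by
    intro l
    have hseq : (fun M => P (CF l M)) = fun M => P (CF 0 M) :=
      funext fun M => by rw [hCFlaw l M, hCFlaw 0 M]
    exact tendsto_nhds_unique (hseq ▸ htendC l) (htendC 0)
  have hC0 : P (Cs 0) = ENNReal.ofReal pstar := by
    have hset : Cs 0 = {ω | ∀ i : ℕ, 1 ≤ i → 0 < walk ξ μ i ω} := rfl
    rw [hset, hpstar, ENNReal.ofReal_toReal (measure_ne_top _ _)]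
  have hpstar0 : 0 ≤ pstar := by rw [hpstar]; exact ENNReal.toReal_nonneg
  -- constants
  have hcOne0 : 0 < cOne γ μ := by
    rw [cOne]
    have h1 : (0:ℝ) < μ ^ (-γ) := Real.rpow_pos_of_pos hμ _
    have h2 : (0:ℝ) < (1 + μ) ^ γ := Real.rpow_pos_of_pos (by linarith) _
    positivity
  set c : ℝ := cOne γ μ * cTwo * pstar with hc
  have hc0 : 0 ≤ c := by
    apply mul_nonneg (mul_nonneg hcOne0.le aux_cTwo') hpstar0
  -- per-index bound
  have hbound : ∀ j : ℕ, k ≤ j →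
      ENNReal.ofReal (c / γ * ((j : ℝ) ^ (-γ) - ((j : ℝ) + 1) ^ (-γ)))
        ≤ P {ω | ∀ i : ℕ, i ≠ j → walk ξ μ j ω < walk ξ μ i ω} := by
    intro j hj
    obtain ⟨n, rfl⟩ : ∃ n, j = n + 1 := ⟨j - 1, by omega⟩
    set jR : ℝ := ((n + 1 : ℕ) : ℝ) with hjR
    have hjR1 : 1 ≤ jR := by rw [hjR]; exact_mod_cast Nat.one_le_iff_ne_zero.mpr (by omega)
    have hjR0 : 0 < jR := lt_of_lt_of_le one_pos hjR1
    set a : ℝ := jR ^ γ⁻¹ with ha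
    have ha0 : 0 < a := Real.rpow_pos_of_pos hjR0 _
    have haγ : a ^ γ = jR := Real.rpow_inv_rpow hjR0.le (ne_of_gt hγ0)
    set T : ℝ := μ + (jR - 1) * (a + μ) with hT
    have hTmu : μ ≤ T := by nlinarith
    have hT0 : 0 < T := lt_of_lt_of_le hμ hTmu
    set s : ℕ → Set ℝ := fun i => if i = n then Set.Iio (-T) else {x : ℝ | |x| ≤ a} with hs
    have hsmeas : ∀ i, MeasurableSet (s i) := by
      intro i
      rw [hs]
      dsimp only
      split
      · exact measurableSet_Iio
      · exact measurableSet_le measurable_abs measurable_const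
    set B : Set Ω := ⋂ i ∈ Finset.range (n + 1), ξ i ⁻¹' s i with hB
    have hBmeas : MeasurableSet B := by
      rw [hB]
      exact Finset.measurableSet_biInter _ fun i _ => hmeas i (hsmeas i)
    -- B ∩ Cs (n+1) ⊆ A
    have hsubset : B ∩ Cs (n + 1)
        ⊆ {ω | ∀ i : ℕ, i ≠ n + 1 → walk ξ μ (n + 1) ω < walk ξ μ i ω} := by
      rintro ω ⟨hBω, hCω⟩
      simp only [hB, Set.mem_iInter, Finset.mem_range] at hBω
      simp only [hCs, Set.mem_setOf_eq] at hCω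
      intro i hi
      rcases lt_or_gt_of_ne hi with hlt | hgt
      · -- i < n + 1
        have hsplit : walk ξ μ (n + 1) ω
            = walk ξ μ i ω + ∑ m ∈ Finset.Ico i (n + 1), (ξ m ω + μ) := by
          rw [walk, walk, Finset.range_eq_Ico,
            ← Finset.sum_Ico_consecutive _ (Nat.zero_le i) (le_of_lt hlt), ← Finset.range_eq_Ico]
        have htop : ∑ m ∈ Finset.Ico i (n + 1), (ξ m ω + μ)
            = ∑ m ∈ Finset.Ico i n, (ξ m ω + μ) + (ξ n ω + μ) :=
          Finset.sum_Ico_succ_top (by omega) _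
        have hball : ∀ m ∈ Finset.Ico i n, ξ m ω + μ ≤ a + μ := by
          intro m hm
          simp only [Finset.mem_Ico] at hm
          have h1 := hBω m (by omega)
          rw [Set.mem_preimage, hs] at h1
          dsimp only at h1
          rw [if_neg (by omega)] at h1
          have h2 : |ξ m ω| ≤ a := h1
          have h3 := (abs_le.mp h2).2
          linarith
        have hsum1 : ∑ m ∈ Finset.Ico i n, (ξ m ω + μ) ≤ ((n - i : ℕ) : ℝ) * (a + μ) := by
          have h1 := Finset.sum_le_card_nsmul (Finset.Ico i n) _ (a + μ) hball
          rwa [Nat.card_Ico, nsmul_eq_mul] at h1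
        have hcast : ((n - i : ℕ) : ℝ) ≤ jR - 1 := by
          have h1 : ((n - i : ℕ) : ℝ) ≤ (n : ℝ) := by exact_mod_cast Nat.sub_le n i
          have h2 : (n : ℝ) = jR - 1 := by rw [hjR]; push_cast; ring
          linarith
        have hnegT : ξ n ω < -T := by
          have h1 := hBω n (by omega)
          rw [Set.mem_preimage, hs] at h1
          dsimp only at h1
          rwa [if_pos rfl] at h1
        have hstep : ∑ m ∈ Finset.Ico i (n + 1), (ξ m ω + μ) < 0 := by
          rw [htop]
          have h1 : ((n - i : ℕ) : ℝ) * (a + μ) ≤ (jR - 1) * (a + μ) :=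
            mul_le_mul_of_nonneg_right hcast (by linarith)
          have h2 : -T + μ = -((jR - 1) * (a + μ)) := by rw [hT]; ring
          nlinarith
        rw [hsplit]
        linarith
      · -- i > n + 1
        have hsplit : walk ξ μ i ω
            = walk ξ μ (n + 1) ω + ∑ m ∈ Finset.Ico (n + 1) i, (ξ m ω + μ) := by
          rw [walk, walk, Finset.range_eq_Ico,
            ← Finset.sum_Ico_consecutive _ (Nat.zero_le (n + 1)) (le_of_lt hgt), ← Finset.range_eq_Ico]
        have hre : ∑ m ∈ Finset.Ico (n + 1) i, (ξ m ω + μ)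
            = ∑ m ∈ Finset.range (i - (n + 1)), (ξ (m + (n + 1)) ω + μ) := by
          rw [Finset.sum_Ico_eq_sum_range]
          exact Finset.sum_congr rfl fun m _ => by rw [Nat.add_comm]
        have hpos := hCω (i - (n + 1)) (by omega)
        rw [hsplit, hre]
        linarith
    -- independence
    have hSB : MeasurableSet {x : Fin (n + 1) → ℝ | ∀ i : Fin (n + 1), x i ∈ s (i : ℕ)} := by
      have h : {x : Fin (n + 1) → ℝ | ∀ i : Fin (n + 1), x i ∈ s (i : ℕ)}
          = ⋂ i : Fin (n + 1), (fun x : Fin (n + 1) → ℝ => x i) ⁻¹' s (i : ℕ) := by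
        ext x; simp
      rw [h]
      exact MeasurableSet.iInter fun i => measurable_pi_apply i (hsmeas _)
    have hBpre : (fun ω (i : Fin (n + 1)) => ξ ((i : ℕ) + 0) ω) ⁻¹'
        {x : Fin (n + 1) → ℝ | ∀ i : Fin (n + 1), x i ∈ s (i : ℕ)} = B := by
      ext ω
      simp only [Set.mem_preimage, Set.mem_setOf_eq, hB, Set.mem_iInter, Finset.mem_range]
      constructor
      · intro h i hi
        exact h ⟨i, hi⟩
      · intro h i
        exact h (i : ℕ) i.2
    have hindepBC : ∀ M : ℕ, IndepFun (fun ω (i : Fin (n + 1)) => ξ ((i : ℕ) + 0) ω)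
        (fun ω (i : Fin M) => ξ ((i : ℕ) + (n + 1)) ω) P := by
      intro M
      have h0 := hindep.indepFun_finset (Finset.range (n + 1)) (Finset.Ico (n + 1) (n + 1 + M))
        (by
          rw [Finset.disjoint_left]
          intro x hx hx'
          simp only [Finset.mem_range] at hx
          simp only [Finset.mem_Ico] at hx'
          omega) hmeas
      have hφ : Measurable
          (fun (x : (Finset.range (n + 1) : Finset ℕ) → ℝ) (i : Fin (n + 1)) =>
            x ⟨(i : ℕ), by simp only [Finset.mem_range]; exact i.2⟩) :=
        measurable_pi_lambda _ fun i => measurable_pi_apply _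
      have hψ : Measurable
          (fun (x : (Finset.Ico (n + 1) (n + 1 + M) : Finset ℕ) → ℝ) (i : Fin M) =>
            x ⟨(i : ℕ) + (n + 1), by simp only [Finset.mem_Ico]; omega⟩) :=
        measurable_pi_lambda _ fun i => measurable_pi_apply _
      exact h0.comp hφ hψ
    have hfact : ∀ M, P (B ∩ CF (n + 1) M) = P B * P (CF (n + 1) M) := by
      intro M
      rw [← hBpre, ← hpre (n + 1) M]
      exact (hindepBC M).measure_inter_preimage_eq_mul _ _ hSB (hDmeas M)
    have htendBC : Tendsto (fun M => P (B ∩ CF (n + 1) M)) atTop (nhds (P (B ∩ Cs (n + 1)))) := by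
      have h1 : ⋂ M, (B ∩ CF (n + 1) M) = B ∩ Cs (n + 1) := by
        rw [← hCFiInter (n + 1), Set.inter_iInter]
      rw [← h1]
      exact tendsto_measure_iInter_atTop
        (fun M => (hBmeas.inter (hCFmeas _ M)).nullMeasurableSet)
        (fun M M' h => Set.inter_subset_inter_right _ (hCFanti _ h)) ⟨0, measure_ne_top _ _⟩
    have htendBC' : Tendsto (fun M => P B * P (CF (n + 1) M)) atTop
        (nhds (P B * P (Cs 0))) := by
      have h1 := htendC (n + 1)
      rw [hCeq (n + 1)] at h1
      exact ENNReal.Tendsto.const_mul h1 (Or.inr (measure_ne_top _ _))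
    have hBC : P (B ∩ Cs (n + 1)) = P B * ENNReal.ofReal pstar := by
      rw [← hC0]
      exact tendsto_nhds_unique ((Filter.tendsto_congr hfact).mp htendBC) htendBC'
    -- compute P B
    have hPB : P B = ENNReal.ofReal ((jR / (1 + jR)) ^ (jR - 1) * (1 / (2 * (1 + T ^ γ)))) := by
      have h1 : P B = ∏ i ∈ Finset.range (n + 1), P (ξ i ⁻¹' s i) := by
        rw [hB]
        exact hindep.measure_inter_preimage_eq_mul _ (fun i _ => hsmeas i)
      rw [h1, Finset.prod_range_succ]
      have h2 : ∀ i ∈ Finset.range n, P (ξ i ⁻¹' s i) = ENNReal.ofReal (jR / (1 + jR)) := by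
        intro i hi
        simp only [Finset.mem_range] at hi
        rw [hmap i _ (hsmeas i), hs]
        dsimp only
        rw [if_neg (by omega), habs a ha0.le, haγ]
      have h3 : P (ξ n ⁻¹' s n) = ENNReal.ofReal (1 / (2 * (1 + T ^ γ))) := by
        rw [hmap n _ (hsmeas n), hs]
        dsimp only
        rw [if_pos rfl, hneg T hT0.le]
      rw [Finset.prod_congr rfl h2, Finset.prod_const, Finset.card_range, h3]
      have hq0 : (0:ℝ) ≤ jR / (1 + jR) := by positivity
      rw [← ENNReal.ofReal_pow hq0, ← ENNReal.ofReal_mul (pow_nonneg hq0 _)]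
      congr 2
      rw [← Real.rpow_natCast (jR / (1 + jR)) n]
      congr 1
      rw [hjR]
      push_cast
      ring
    -- real inequalities
    have hTγ0 : (0:ℝ) < T ^ γ := Real.rpow_pos_of_pos hT0 _
    have hlow1 : cTwo ≤ (jR / (1 + jR)) ^ (jR - 1) := aux_cTwo_le hjR1
    have hμγ0 : (0:ℝ) < μ ^ (-γ) := Real.rpow_pos_of_pos hμ _
    have h1μγ0 : (0:ℝ) < (1 + μ) ^ γ := Real.rpow_pos_of_pos (by linarith) _
    have hjp0 : (0:ℝ) < jR ^ (γ + 1) := Real.rpow_pos_of_pos hjR0 _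
    have hlow2 : cOne γ μ * jR ^ (-(γ + 1)) ≤ 1 / (2 * (1 + T ^ γ)) := by
      have hTle : T ≤ (1 + μ) * jR ^ ((γ + 1) / γ) := by
        have e1 : jR * a = jR ^ ((γ + 1) / γ) := by
          rw [show (γ + 1) / γ = 1 + γ⁻¹ by field_simp, Real.rpow_add hjR0, Real.rpow_one, ha]
        have e2 : jR ≤ jR ^ ((γ + 1) / γ) := by
          calc jR = jR ^ (1:ℝ) := (Real.rpow_one _).symm
          _ ≤ jR ^ ((γ + 1) / γ) := Real.rpow_le_rpow_of_exponent_le hjR1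
            (by rw [le_div_iff₀ hγ0]; linarith)
        have e3 : T ≤ jR * a + jR * μ := by rw [hT]; nlinarith
        have e4 : jR * μ ≤ μ * jR ^ ((γ + 1) / γ) :=
          by rw [mul_comm]; exact mul_le_mul_of_nonneg_left e2 hμ.le
        nlinarith
      have hTγ : T ^ γ ≤ (1 + μ) ^ γ * jR ^ (γ + 1) := by
        calc T ^ γ ≤ ((1 + μ) * jR ^ ((γ + 1) / γ)) ^ γ :=
          Real.rpow_le_rpow hT0.le hTle hγ0.le
        _ = (1 + μ) ^ γ * (jR ^ ((γ + 1) / γ)) ^ γ :=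
          Real.mul_rpow (by linarith) (Real.rpow_nonneg hjR0.le _)
        _ = (1 + μ) ^ γ * jR ^ (γ + 1) := by
          rw [← Real.rpow_mul hjR0.le, div_mul_cancel₀ _ (ne_of_gt hγ0)]
      have hone : (1:ℝ) ≤ μ ^ (-γ) * T ^ γ := by
        have h1 : (1:ℝ) ≤ (T / μ) ^ γ := by
          calc (1:ℝ) = 1 ^ γ := (Real.one_rpow γ).symm
          _ ≤ (T / μ) ^ γ := Real.rpow_le_rpow zero_le_one ((one_le_div hμ).mpr hTmu) hγ0.le
        rwa [Real.div_rpow hT0.le hμ.le, div_eq_mul_inv, ← Real.rpow_neg hμ.le, mul_comm] at h1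
      have h1T : 1 + T ^ γ ≤ (1 + μ ^ (-γ)) * ((1 + μ) ^ γ * jR ^ (γ + 1)) := by
        have hA : (1 + μ ^ (-γ)) * T ^ γ ≤ (1 + μ ^ (-γ)) * ((1 + μ) ^ γ * jR ^ (γ + 1)) :=
          mul_le_mul_of_nonneg_left hTγ (by linarith)
        nlinarith
      have hDX0 : (0:ℝ) < 2 * (1 + μ ^ (-γ)) * (1 + μ) ^ γ * jR ^ (γ + 1) := by positivity
      have hrw : cOne γ μ * jR ^ (-(γ + 1))
          = 1 / (2 * (1 + μ ^ (-γ)) * (1 + μ) ^ γ * jR ^ (γ + 1)) := by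
        rw [cOne, Real.rpow_neg hjR0.le]
        field_simp
      rw [hrw]
      rw [div_le_div_iff₀ hDX0 (by linarith)]
      nlinarith
    -- assemble
    calc ENNReal.ofReal (c / γ * (((n + 1 : ℕ) : ℝ) ^ (-γ) - (((n + 1 : ℕ) : ℝ) + 1) ^ (-γ)))
        ≤ ENNReal.ofReal (c * jR ^ (-(γ + 1))) := by
          apply ENNReal.ofReal_le_ofReal
          have hber := aux_bernoulli hγ1 hjR1
          have h1 : c / γ * (jR ^ (-γ) - (jR + 1) ^ (-γ)) ≤ c / γ * (γ * jR ^ (-(γ + 1))) :=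
            mul_le_mul_of_nonneg_left hber (div_nonneg hc0 hγ0.le)
          have h2 : c / γ * (γ * jR ^ (-(γ + 1))) = c * jR ^ (-(γ + 1)) := by
            field_simp
          rw [← hjR, ← h2]
          exact h1
      _ ≤ ENNReal.ofReal ((jR / (1 + jR)) ^ (jR - 1) * (1 / (2 * (1 + T ^ γ))) * pstar) := by
          apply ENNReal.ofReal_le_ofReal
          have h1 : c * jR ^ (-(γ + 1)) = cTwo * (cOne γ μ * jR ^ (-(γ + 1))) * pstar := by
            rw [hc]; ring
          rw [h1]
          apply mul_le_mul_of_nonneg_right _ hpstar0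
          have h2 : 0 ≤ cOne γ μ * jR ^ (-(γ + 1)) :=
            mul_nonneg hcOne0.le (Real.rpow_nonneg hjR0.le _)
          exact mul_le_mul hlow1 hlow2 h2 (Real.rpow_nonneg (by positivity) _)
      _ = P B * ENNReal.ofReal pstar := by
          rw [ENNReal.ofReal_mul (mul_nonneg (Real.rpow_nonneg (by positivity) _) (by positivity)),
            hPB]
      _ = P (B ∩ Cs (n + 1)) := hBC.symm
      _ ≤ P {ω | ∀ i : ℕ, i ≠ n + 1 → walk ξ μ (n + 1) ω < walk ξ μ i ω} :=
          measure_mono hsubset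
  -- final summation
  set e : ℕ ≃ {j : ℕ // k ≤ j} :=
    { toFun := fun m => ⟨m + k, Nat.le_add_left k m⟩
      invFun := fun j => (j : ℕ) - k
      left_inv := fun m => by simp
      right_inv := fun j => by
        ext
        simp only
        omega } with he
  have hsum : HasSum (fun m : ℕ => c / γ * ((((m + k : ℕ)) : ℝ) ^ (-γ)
      - ((((m + k : ℕ)) : ℝ) + 1) ^ (-γ))) (c / γ * ((k : ℝ) ^ (-γ))) :=
    (aux_telescope hγ0 k hk1).mul_left _
  have hnn : ∀ m : ℕ, 0 ≤ c / γ * ((((m + k : ℕ)) : ℝ) ^ (-γ)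
      - ((((m + k : ℕ)) : ℝ) + 1) ^ (-γ)) := by
    intro m
    apply mul_nonneg (div_nonneg hc0 hγ0.le)
    have h0 : (0:ℝ) < ((m + k : ℕ) : ℝ) := by exact_mod_cast by omega
    have := aux_antitone hγ0 h0 (by linarith : ((m + k : ℕ) : ℝ) ≤ ((m + k : ℕ) : ℝ) + 1)
    linarith
  calc ENNReal.ofReal (cOne γ μ * cTwo * pstar / γ * (k : ℝ) ^ (-γ))
      = ENNReal.ofReal (∑' m : ℕ, c / γ * ((((m + k : ℕ)) : ℝ) ^ (-γ)
        - ((((m + k : ℕ)) : ℝ) + 1) ^ (-γ))) := by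
        rw [hsum.tsum_eq]
    _ = ∑' m : ℕ, ENNReal.ofReal (c / γ * ((((m + k : ℕ)) : ℝ) ^ (-γ)
        - ((((m + k : ℕ)) : ℝ) + 1) ^ (-γ))) :=
        ENNReal.ofReal_tsum_of_nonneg hnn hsum.summable
    _ = ∑' j : {j : ℕ // k ≤ j}, ENNReal.ofReal (c / γ * (((j : ℕ) : ℝ) ^ (-γ)
        - ((((j : ℕ)) : ℝ) + 1) ^ (-γ))) := by
        exact e.tsum_eq (fun j => ENNReal.ofReal (c / γ * (((j : ℕ) : ℝ) ^ (-γ)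
          - ((((j : ℕ)) : ℝ) + 1) ^ (-γ))))
    _ ≤ ∑' j : {j : ℕ // k ≤ j},
        P {ω | ∀ i : ℕ, i ≠ (j : ℕ) → walk ξ μ (j : ℕ) ω < walk ξ μ i ω} :=
        ENNReal.tsum_le_tsum fun j => hbound (j : ℕ) j.2
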